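/- arXiv:2103.10448 — 3 statements merged into one kernel-verified Lean document; each statement's English description precedes it below -/
import Mathlib

section
/- Let $a_0:\mathbb{R}\to\mathbb{R}$ be bounded with $a_0(t)\le C$ for all $t$ (some $C>0$), and suppose $t\mapsto e^{\int_0^t a_0(s)\,ds}$ is integrable on $(-\infty,0]$. Then the function $v(t)=\int_{-\infty}^t e^{-\int_s^t a_0(r)\,dr}\,ds$ is well-defined for all $t\in\mathbb{R}$, satisfies $v'(t)=-a_0(t)v(t)+1$, and $v(t)\ge 1/C$ for all $t\in\mathbb{R}$. -/
/-!
With the primitive `F t = ∫ r in 0..t, a₀ r`, the kernel factors as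
`exp (-∫ r in s..t, a₀ r) = exp (-F t) * exp (F s)`, so
`v t = exp (-F t) * ∫ s in Iic t, exp (F s)` and the differential equation is the product rule.
The lower bound comes from `∫ r in s..t, a₀ r ≤ C (t - s)`, which gives
`v t ≥ ∫ s in Iic t, exp (C (s - t)) = 1 / C`.
-/

open MeasureTheory Set

section Iic

variable {E : Type*} [NormedAddCommGroup E] {f : ℝ → E}

theorem MeasureTheory.IntegrableOn.Iic_of_locallyIntegrable {a : ℝ} (ha : IntegrableOn f (Iic a))
    (hf : LocallyIntegrable f) (b : ℝ) : IntegrableOn f (Iic b) :=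
  (ha.union (hf.integrableOn_isCompact isCompact_Icc : IntegrableOn f (Icc a b))).mono_set
    fun s (hs : s ≤ b) => (le_or_gt s a).imp id fun h => (⟨h.le, hs⟩ : s ∈ Icc a b)

theorem Continuous.hasDerivAt_integral_Iic [NormedSpace ℝ E] [CompleteSpace E] {a : ℝ}
    (hf : Continuous f) (ha : IntegrableOn f (Iic a)) (t : ℝ) :
    HasDerivAt (fun u => ∫ s in Iic u, f s) (f t) t := by
  have hsplit : (fun u => ∫ s in Iic u, f s)
      = fun u => (∫ s in Iic a, f s) + ∫ s in a..u, f s := funext fun u => by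
    rw [← intervalIntegral.integral_Iic_sub_Iic ha
      (ha.Iic_of_locallyIntegrable hf.locallyIntegrable u), add_sub_cancel]
  rw [hsplit]
  exact ((hf.integral_hasStrictDerivAt a t).hasDerivAt).const_add _

end Iic

section LinearODE

variable {a : ℝ → ℝ}

theorem exp_neg_intervalIntegral_eq_mul (ha : Continuous a) (s t : ℝ) :
    Real.exp (-∫ r in s..t, a r)
      = Real.exp (-∫ r in (0:ℝ)..t, a r) * Real.exp (∫ r in (0:ℝ)..s, a r) := by
  rw [← intervalIntegral.integral_interval_sub_left (ha.intervalIntegrable 0 t)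
    (ha.intervalIntegrable 0 s), ← Real.exp_add]
  ring_nf

theorem integrableOn_exp_neg_intervalIntegral (ha : Continuous a)
    (hint : IntegrableOn (fun t => Real.exp (∫ s in (0:ℝ)..t, a s)) (Iic 0)) (t : ℝ) :
    IntegrableOn (fun s => Real.exp (-∫ r in s..t, a r)) (Iic t) := by
  rw [funext (exp_neg_intervalIntegral_eq_mul ha · t)]
  have hexp : Continuous fun s => Real.exp (∫ r in (0:ℝ)..s, a r) :=
    (intervalIntegral.continuous_primitive ha.intervalIntegrable 0).rexp
  exact (hint.Iic_of_locallyIntegrable hexp.locallyIntegrable t).const_mul _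

theorem hasDerivAt_integral_Iic_exp_neg_intervalIntegral (ha : Continuous a)
    (hint : IntegrableOn (fun t => Real.exp (∫ s in (0:ℝ)..t, a s)) (Iic 0)) (t : ℝ) :
    HasDerivAt (fun t => ∫ s in Iic t, Real.exp (-∫ r in s..t, a r))
      (-(a t) * (∫ s in Iic t, Real.exp (-∫ r in s..t, a r)) + 1) t := by
  set F : ℝ → ℝ := fun t => ∫ r in (0:ℝ)..t, a r
  have hfactor : (fun t => ∫ s in Iic t, Real.exp (-∫ r in s..t, a r))
      = fun t => Real.exp (-F t) * ∫ s in Iic t, Real.exp (F s) := funext fun u => by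
    rw [funext (exp_neg_intervalIntegral_eq_mul ha · u), integral_const_mul]
  have hF : HasDerivAt F (a t) t := (ha.integral_hasStrictDerivAt 0 t).hasDerivAt
  have hG : HasDerivAt (fun u => ∫ s in Iic u, Real.exp (F s)) (Real.exp (F t)) t :=
    (intervalIntegral.continuous_primitive ha.intervalIntegrable 0).rexp.hasDerivAt_integral_Iic
      hint t
  have hcancel : Real.exp (-F t) * Real.exp (F t) = 1 := by
    rw [← Real.exp_add, neg_add_cancel, Real.exp_zero]
  rw [hfactor, congrFun hfactor t]
  refine (hF.neg.exp.mul hG).congr_deriv ?_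
  linear_combination hcancel

theorem one_div_le_integral_Iic_exp_neg_intervalIntegral {C : ℝ} (hC : 0 < C)
    (ha : Continuous a) (hub : ∀ t, a t ≤ C) (t : ℝ)
    (hi : IntegrableOn (fun s => Real.exp (-∫ r in s..t, a r)) (Iic t)) :
    1 / C ≤ ∫ s in Iic t, Real.exp (-∫ r in s..t, a r) := by
  calc 1 / C = ∫ s in Iic t, Real.exp (-(C * t)) * Real.exp (C * s) := by
        rw [integral_const_mul, integral_exp_mul_Iic hC, mul_div_assoc', ← Real.exp_add,
          neg_add_cancel, Real.exp_zero]
    _ ≤ ∫ s in Iic t, Real.exp (-∫ r in s..t, a r) := by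
      refine setIntegral_mono_on ((integrableOn_exp_mul_Iic hC t).const_mul _) hi
        measurableSet_Iic fun s (hst : s ≤ t) => ?_
      have hbound : (∫ r in s..t, a r) ≤ ∫ r in s..t, C :=
        intervalIntegral.integral_mono_on hst (ha.intervalIntegrable _ _)
          intervalIntegrable_const fun r _ => hub r
      rw [intervalIntegral.integral_const, smul_eq_mul] at hbound
      rw [← Real.exp_add, Real.exp_le_exp]
      nlinarith

end LinearODE

theorem stmt0_general (a0 : ℝ → ℝ) (C : ℝ) (hC : 0 < C)
    (hcont : Continuous a0) (hub : ∀ t, a0 t ≤ C)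
    (hint : IntegrableOn (fun t => Real.exp (∫ s in (0:ℝ)..t, a0 s)) (Iic 0)) :
    (∀ t : ℝ, IntegrableOn (fun s => Real.exp (-∫ r in s..t, a0 r)) (Iic t)) ∧
    (∀ t : ℝ, HasDerivAt (fun t => ∫ s in Iic t, Real.exp (-∫ r in s..t, a0 r))
      (-(a0 t) * (∫ s in Iic t, Real.exp (-∫ r in s..t, a0 r)) + 1) t) ∧
    (∀ t : ℝ, 1 / C ≤ ∫ s in Iic t, Real.exp (-∫ r in s..t, a0 r)) :=
  ⟨integrableOn_exp_neg_intervalIntegral hcont hint,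
    hasDerivAt_integral_Iic_exp_neg_intervalIntegral hcont hint,
    fun t => one_div_le_integral_Iic_exp_neg_intervalIntegral hC hcont hub t
      (integrableOn_exp_neg_intervalIntegral hcont hint t)⟩

theorem stmt0 (a0 : ℝ → ℝ) (C : ℝ) (hC : 0 < C)
    (hcont : Continuous a0) (hbdd : ∃ M, ∀ t, |a0 t| ≤ M) (hub : ∀ t, a0 t ≤ C)
    (hint : IntegrableOn (fun t => Real.exp (∫ s in (0:ℝ)..t, a0 s)) (Iic 0)) :
    (∀ t : ℝ, IntegrableOn (fun s => Real.exp (-∫ r in s..t, a0 r)) (Iic t)) ∧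
    (∀ t : ℝ, HasDerivAt (fun t => ∫ s in Iic t, Real.exp (-∫ r in s..t, a0 r))
      (-(a0 t) * (∫ s in Iic t, Real.exp (-∫ r in s..t, a0 r)) + 1) t) ∧
    (∀ t : ℝ, 1 / C ≤ ∫ s in Iic t, Real.exp (-∫ r in s..t, a0 r)) :=
  stmt0_general a0 C hC hcont hub hint
end

section
/- Let $c:\mathbb{R}\to(0,\infty)$ be of the form $c(t)=e^{\int_0^t a(s)\,ds}$ with $a:\mathbb{R}\to\mathbb{R}$ continuous and bounded. If for some $\beta>0$ the function $t\mapsto c(t)^{\beta}$ is integrable on $(-\infty,0]$, then $\lim_{t\to-\infty}c(t)=0$. -/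
/-!
Write `c = exp F` with `F t = ∫₀ᵗ a`. Since `|a| ≤ M`, the function `F` is `M`-Lipschitz, so
`c t ^ β ≤ exp (β M) · c x ^ β` whenever `x ∈ [t, t + 1]`. Averaging over `[t, t + 1]` bounds
`c t ^ β` by a multiple of the tail integral `∫_{x ≤ t + 1} c ^ β`, which tends to `0` at `-∞`.
Hence `β F → -∞`, so `F → -∞` and `c → 0`.
-/

open MeasureTheory Set Filter Topology

theorem abs_primitive_sub_le {a : ℝ → ℝ} {M : ℝ} (ha : ∀ x y, IntervalIntegrable a volume x y)
    (hM : ∀ t, |a t| ≤ M) (b x y : ℝ) :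
    |(∫ s in b..y, a s) - ∫ s in b..x, a s| ≤ M * |y - x| := by
  rw [intervalIntegral.integral_interval_sub_left (ha b y) (ha b x)]
  exact intervalIntegral.norm_integral_le_of_norm_le_const fun s _ =>
    (Real.norm_eq_abs _).trans_le (hM s)

theorem tendsto_atBot_zero_of_integrableOn_Iic_of_le_mul {f : ℝ → ℝ} {b K : ℝ}
    (hf : IntegrableOn f (Iic b)) (hf0 : ∀ t, 0 ≤ f t)
    (hK : ∀ t, ∀ x ∈ Icc t (t + 1), f t ≤ K * f x) : Tendsto f atBot (𝓝 0) := by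
  set K' := max K 0
  have hK' : ∀ t, ∀ x ∈ Icc t (t + 1), f t ≤ K' * f x := fun t x hx =>
    (hK t x hx).trans (mul_le_mul_of_nonneg_right (le_max_left K 0) (hf0 x))
  have hbound : ∀ t ≤ b - 1, f t ≤ K' * ∫ x in Iic (t + 1), f x := by
    intro t ht
    have hIic : IntegrableOn f (Iic (t + 1)) := hf.mono_set (Iic_subset_Iic.2 (by linarith))
    have hIcc : IntegrableOn f (Icc t (t + 1)) := hIic.mono_set Icc_subset_Iic_self
    calc f t = ∫ _ in Icc t (t + 1), f t := by simp
      _ ≤ ∫ x in Icc t (t + 1), K' * f x :=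
        setIntegral_mono_on (integrableOn_const (by simp [Real.volume_Icc]))
          (hIcc.const_mul K') measurableSet_Icc (hK' t)
      _ = K' * ∫ x in Icc t (t + 1), f x := integral_const_mul K' _
      _ ≤ K' * ∫ x in Iic (t + 1), f x :=
        mul_le_mul_of_nonneg_left (setIntegral_mono_set hIic (Eventually.of_forall hf0)
          Icc_subset_Iic_self.eventuallyLE) (le_max_right K 0)
  have htail : Tendsto (fun t => K' * ∫ x in Iic (t + 1), f x) atBot (𝓝 0) := by
    simpa using (tendsto_integral_Iic_zero (f := f) (μ := volume)
      (tendsto_atBot_add_const_right _ 1 tendsto_id)).const_mul K'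
  exact squeeze_zero' (Eventually.of_forall hf0)
    ((eventually_le_atBot (b - 1)).mono hbound) htail

theorem stmt3 (a : ℝ → ℝ) (hcont : Continuous a) (hbdd : ∃ M, ∀ t, |a t| ≤ M)
    (c : ℝ → ℝ) (hc : ∀ t, c t = Real.exp (∫ s in (0:ℝ)..t, a s))
    (β : ℝ) (hβ : 0 < β)
    (hint : IntegrableOn (fun t => c t ^ β) (Iic 0)) :
    Tendsto c atBot (nhds 0) := by
  obtain ⟨M, hM⟩ := hbdd
  set F : ℝ → ℝ := fun t => ∫ s in (0:ℝ)..t, a s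
  have hcβ : ∀ t, c t ^ β = Real.exp (β * F t) := fun t => by
    rw [hc, ← Real.exp_mul, mul_comm]
  have hF : ∀ t, ∀ x ∈ Icc t (t + 1), F t ≤ M + F x := fun t x hx => by
    have hlip := abs_primitive_sub_le hcont.intervalIntegrable hM 0 x t
    have hxt : |t - x| ≤ 1 := by rw [abs_le]; constructor <;> linarith [hx.1, hx.2]
    have hM0 : 0 ≤ M := (abs_nonneg _).trans (hM 0)
    nlinarith [le_abs_self (F t - F x), abs_nonneg (t - x)]
  have hdecay : Tendsto (fun t => Real.exp (β * F t)) atBot (𝓝 0) := by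
    refine tendsto_atBot_zero_of_integrableOn_Iic_of_le_mul (K := Real.exp (β * M))
      (hint.congr_fun (fun t _ => hcβ t) measurableSet_Iic) (fun t => (Real.exp_pos _).le)
      fun t x hx => ?_
    rw [← Real.exp_add, Real.exp_le_exp, ← mul_add]
    exact mul_le_mul_of_nonneg_left (hF t x hx) hβ.le
  rw [Real.tendsto_exp_comp_nhds_zero, tendsto_const_mul_atBot_of_pos hβ] at hdecay
  simpa only [funext hc] using Real.tendsto_exp_comp_nhds_zero.2 hdecay
end

section
/- Let $(P,\sigma)$ be a continuous flow on a compact metric space and suppose every point of $P$ has an $\alpha$-limit set that contains a minimal set. Given a family of minimal sets $(M_i)_{i\in I}$ containing all minimal sets of $P$, points $p_i\in M_i$, and radii $\delta_i>0$, one has $P=\bigcup_{i\in I}\bigcup_{t\ge 0} B(p_i,\delta_i)\cdot t$, where $B(p,\delta)$ is the open ball and $A\cdot t=\sigma_t(A)$. -/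
/-- A set is invariant under the flow `σ`. -/
def FlowInvariant {P : Type*} (σ : P → ℝ → P) (A : Set P) : Prop :=
  ∀ t : ℝ, (fun p => σ p t) '' A = A

/-- A minimal set of the flow `σ`: a nonempty compact invariant set with no proper
nonempty compact invariant subset. -/
def IsMinimalSet {P : Type*} [TopologicalSpace P] (σ : P → ℝ → P) (M : Set P) : Prop :=
  M.Nonempty ∧ IsCompact M ∧ FlowInvariant σ M ∧
    ∀ N ⊆ M, N.Nonempty → IsCompact N → FlowInvariant σ N → N = M

/-- The α-limit set of a point under the flow `σ`. -/
def alphaLimit {P : Type*} [TopologicalSpace P] (σ : P → ℝ → P) (p : P) : Set P :=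
  ⋂ T : ℝ, closure ((fun t => σ p t) '' Set.Iic T)

theorem stmt15 {P : Type*} [MetricSpace P] [CompactSpace P]
    (σ : P → ℝ → P) (hσ0 : ∀ p, σ p 0 = p)
    (hσadd : ∀ p (t s : ℝ), σ (σ p t) s = σ p (t + s))
    (hcont : ∀ t : ℝ, Continuous (fun p => σ p t))
    (halpha : ∀ p : P, ∃ M : Set P, IsMinimalSet σ M ∧ M ⊆ alphaLimit σ p)
    {I : Type*} (M : I → Set P) (hM : ∀ i, IsMinimalSet σ (M i))
    (hall : ∀ N : Set P, IsMinimalSet σ N → ∃ i, N = M i)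
    (pt : I → P) (hpt : ∀ i, pt i ∈ M i)
    (δ : I → ℝ) (hδ : ∀ i, 0 < δ i) :
    (Set.univ : Set P) =
      ⋃ i, ⋃ t ∈ Set.Ici (0:ℝ), (fun q => σ q t) '' Metric.ball (pt i) (δ i) := by
  apply Set.eq_of_subset_of_subset _ (Set.subset_univ _)
  intro p _
  obtain ⟨N, hN, hNsub⟩ := halpha p
  obtain ⟨i, rfl⟩ := hall N hN
  have hmem : pt i ∈ alphaLimit σ p := hNsub (hpt i)
  have hcl : pt i ∈ closure ((fun t => σ p t) '' Set.Iic (0:ℝ)) := by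
    exact Set.mem_iInter.mp hmem 0
  obtain ⟨q, hq1, hq2⟩ := Metric.mem_closure_iff.mp hcl (δ i) (hδ i) |>.imp
    (fun q h => h)
  obtain ⟨t, ht, rfl⟩ := hq1
  refine Set.mem_iUnion.mpr ⟨i, Set.mem_iUnion.mpr ⟨-t, Set.mem_iUnion.mpr
    ⟨by simpa using ht, ⟨σ p t, ?_, ?_⟩⟩⟩⟩
  · rw [Metric.mem_ball, dist_comm]; exact hq2
  · show σ (σ p t) (-t) = p
    rw [hσadd]; simp [hσ0]
end
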